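/- arXiv:1903.12005 — 2 statements merged into one kernel-verified Lean document; each statement's English description precedes it below -/
import Mathlib

section
/- Under the hypotheses of the previous statement (positive recurrence and both entrance boundary conditions), the constant value of $F$ equals $2\int_{-\infty}^{\infty}\mu(y)\int_y^{\infty}\frac{\mu([z,\infty))}{\mu(z)\,a(z)}\,dz\,dy$, where $\mu([z,\infty))=\int_z^{\infty}\mu(w)dw$. -/
/-!
Write `G z = ∫_{(z,∞)} m` and `H z = ∫_{(-∞,z)} m`. By Tonelli, each of the three double
integrals in the statement is an integral of `s G H`: over `(x,∞)`, over `(-∞,x)` and over `ℝ`,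
so the two sides agree once `μ = m / ∫ m` and `μ z a z = 1 / (s z ∫ m)` are substituted.
The entrance conditions say, again by Tonelli, that `s G` is integrable near `+∞` and `s H`
near `-∞`; since `G, H ≤ ∫ m`, this makes `s G H` integrable, so the two halves may be added.
-/

open MeasureTheory Set
open scoped ENNReal

section

variable {α β : Type*} [MeasurableSpace α] [MeasurableSpace β] {μ : Measure α} {ν : Measure β}
  [SFinite μ] [SFinite ν] {f : α → ℝ≥0∞} {g : β → ℝ≥0∞}

theorem lintegral_mul_setLIntegral_preimage_comm (hf : Measurable f) (hg : Measurable g)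
    {R : Set (α × β)} (hR : MeasurableSet R) :
    ∫⁻ y, f y * ∫⁻ z in Prod.mk y ⁻¹' R, g z ∂ν ∂μ
      = ∫⁻ z, g z * ∫⁻ y in (·, z) ⁻¹' R, f y ∂μ ∂ν := by
  have hleft : ∀ y, f y * ∫⁻ z in Prod.mk y ⁻¹' R, g z ∂ν
      = ∫⁻ z, R.indicator (fun p => f p.1 * g p.2) (y, z) ∂ν := fun y => by
    rw [← lintegral_const_mul _ hg, ← lintegral_indicator (hR.preimage measurable_prodMk_left)]
    refine lintegral_congr fun z => ?_
    by_cases h : (y, z) ∈ R <;> simp [h]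
  have hright : ∀ z, g z * ∫⁻ y in (·, z) ⁻¹' R, f y ∂μ
      = ∫⁻ y, R.indicator (fun p => f p.1 * g p.2) (y, z) ∂μ := fun z => by
    rw [← lintegral_const_mul _ hf, ← lintegral_indicator (hR.preimage measurable_prodMk_right)]
    refine lintegral_congr fun y => ?_
    by_cases h : (y, z) ∈ R <;> simp [h, mul_comm]
  simp_rw [hleft, hright]
  exact lintegral_lintegral_swap
    (((hf.comp measurable_fst).mul (hg.comp measurable_snd)).indicator hR).aemeasurable

end

section

variable {μ : Measure ℝ} [SFinite μ] {f g : ℝ → ℝ≥0∞}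

theorem lintegral_Ioi_mul_lintegral_Ioc_comm (hf : Measurable f) (hg : Measurable g) (x : ℝ) :
    ∫⁻ y in Ioi x, f y * ∫⁻ z in Ioc x y, g z ∂μ ∂μ
      = ∫⁻ z in Ioi x, g z * ∫⁻ y in Ici z, f y ∂μ ∂μ := by
  have h : ∫⁻ y in Ioi x, f y * ∫⁻ z in Iic y, g z ∂μ.restrict (Ioi x) ∂μ
      = ∫⁻ z in Ioi x, g z * ∫⁻ y in Ici z, f y ∂μ.restrict (Ioi x) ∂μ :=
    lintegral_mul_setLIntegral_preimage_comm hf hg (measurableSet_le measurable_snd measurable_fst)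
  simp only [Measure.restrict_restrict measurableSet_Iic,
    Measure.restrict_restrict measurableSet_Ici, Iic_inter_Ioi] at h
  rw [h]
  refine setLIntegral_congr_fun measurableSet_Ioi fun z hz => ?_
  rw [inter_eq_left.2 (Ici_subset_Ioi.2 hz)]

theorem lintegral_Iio_mul_lintegral_Ico_comm (hf : Measurable f) (hg : Measurable g) (x : ℝ) :
    ∫⁻ y in Iio x, f y * ∫⁻ z in Ico y x, g z ∂μ ∂μ
      = ∫⁻ z in Iio x, g z * ∫⁻ y in Iic z, f y ∂μ ∂μ := by
  have h : ∫⁻ y in Iio x, f y * ∫⁻ z in Ici y, g z ∂μ.restrict (Iio x) ∂μ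
      = ∫⁻ z in Iio x, g z * ∫⁻ y in Iic z, f y ∂μ.restrict (Iio x) ∂μ :=
    lintegral_mul_setLIntegral_preimage_comm hf hg (measurableSet_le measurable_fst measurable_snd)
  simp only [Measure.restrict_restrict measurableSet_Iic,
    Measure.restrict_restrict measurableSet_Ici, Ici_inter_Iio] at h
  rw [h]
  refine setLIntegral_congr_fun measurableSet_Iio fun z hz => ?_
  rw [inter_eq_left.2 (Iic_subset_Iio.2 hz)]

theorem lintegral_mul_lintegral_Ioi_comm (hf : Measurable f) (hg : Measurable g) :
    ∫⁻ y, f y * ∫⁻ z in Ioi y, g z ∂μ ∂μ = ∫⁻ z, g z * ∫⁻ y in Iio z, f y ∂μ ∂μ :=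
  lintegral_mul_setLIntegral_preimage_comm hf hg (measurableSet_lt measurable_fst measurable_snd)

end

section

variable {f g : ℝ → ℝ}

theorem continuous_setIntegral_Ioi (hg : ∀ a, IntegrableOn g (Ioi a)) :
    Continuous fun z => ∫ w in Ioi z, g w := by
  have h : (fun z => ∫ w in Ioi z, g w) = fun z => (∫ w in Ioi 0, g w) - ∫ w in 0..z, g w :=
    funext fun z => by rw [← intervalIntegral.integral_Ioi_sub_Ioi' (hg 0) (hg z), sub_sub_cancel]
  rw [h]
  exact continuous_const.sub <| intervalIntegral.continuous_primitive
    (fun a b => ⟨(hg a).mono_set Ioc_subset_Ioi_self, (hg b).mono_set Ioc_subset_Ioi_self⟩) 0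

theorem continuous_setIntegral_Iio (hg : ∀ a, IntegrableOn g (Iio a)) :
    Continuous fun z => ∫ w in Iio z, g w := by
  have h : (fun z => ∫ w in Iio z, g w) = fun z => (∫ w in Iio 0, g w) + ∫ w in 0..z, g w :=
    funext fun z => by rw [← intervalIntegral.integral_Iio_sub_Iio' (hg z) (hg 0), add_sub_cancel]
  rw [h]
  have hIic : ∀ a, IntegrableOn g (Iic a) := fun a =>
    (integrableOn_Iic_iff_integrableOn_Iio).2 (hg a)
  exact continuous_const.add <| intervalIntegral.continuous_primitive
    (fun a b => ⟨(hIic b).mono_set Ioc_subset_Iic_self, (hIic a).mono_set Ioc_subset_Iic_self⟩) 0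

theorem Continuous.integrableOn_Ioi_of_integrableOn_Ioi (hg : Continuous g) {a : ℝ}
    (ha : IntegrableOn g (Ioi a)) (b : ℝ) : IntegrableOn g (Ioi b) :=
  (hg.integrableOn_Icc.union ha).mono_set fun z hz => by
    rcases le_or_gt z a with h | h
    · exact Or.inl ⟨le_of_lt hz, h⟩
    · exact Or.inr h

theorem lintegral_Ioi_ofReal_mul_intervalIntegral (hf : Continuous f) (hf0 : 0 ≤ f)
    (hfi : Integrable f) (hg : Continuous g) (hg0 : 0 ≤ g) (x : ℝ) :
    ∫⁻ y in Ioi x, ENNReal.ofReal (f y * ∫ z in x..y, g z)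
      = ∫⁻ z in Ioi x, ENNReal.ofReal (g z * ∫ y in Ioi z, f y) := by
  calc ∫⁻ y in Ioi x, ENNReal.ofReal (f y * ∫ z in x..y, g z)
      = ∫⁻ y in Ioi x, ENNReal.ofReal (f y) * ∫⁻ z in Ioc x y, ENNReal.ofReal (g z) :=
        setLIntegral_congr_fun measurableSet_Ioi fun y hy => by
          rw [ENNReal.ofReal_mul (hf0 y), intervalIntegral.integral_of_le (le_of_lt hy),
            ofReal_integral_eq_lintegral_ofReal hg.integrableOn_Ioc (ae_of_all _ hg0)]
    _ = ∫⁻ z in Ioi x, ENNReal.ofReal (g z) * ∫⁻ y in Ici z, ENNReal.ofReal (f y) :=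
        lintegral_Ioi_mul_lintegral_Ioc_comm hf.measurable.ennreal_ofReal
          hg.measurable.ennreal_ofReal x
    _ = ∫⁻ z in Ioi x, ENNReal.ofReal (g z * ∫ y in Ioi z, f y) :=
        lintegral_congr fun z => by
          rw [ENNReal.ofReal_mul (hg0 z), ← setLIntegral_congr Ioi_ae_eq_Ici,
            ofReal_integral_eq_lintegral_ofReal hfi.integrableOn (ae_of_all _ hf0)]

theorem lintegral_Iio_ofReal_mul_intervalIntegral (hf : Continuous f) (hf0 : 0 ≤ f)
    (hfi : Integrable f) (hg : Continuous g) (hg0 : 0 ≤ g) (x : ℝ) :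
    ∫⁻ y in Iio x, ENNReal.ofReal (f y * ∫ z in y..x, g z)
      = ∫⁻ z in Iio x, ENNReal.ofReal (g z * ∫ y in Iio z, f y) := by
  calc ∫⁻ y in Iio x, ENNReal.ofReal (f y * ∫ z in y..x, g z)
      = ∫⁻ y in Iio x, ENNReal.ofReal (f y) * ∫⁻ z in Ico y x, ENNReal.ofReal (g z) :=
        setLIntegral_congr_fun measurableSet_Iio fun y hy => by
          rw [ENNReal.ofReal_mul (hf0 y), intervalIntegral.integral_of_le (le_of_lt hy),
            ofReal_integral_eq_lintegral_ofReal hg.integrableOn_Ioc (ae_of_all _ hg0),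
            setLIntegral_congr Ico_ae_eq_Ioc]
    _ = ∫⁻ z in Iio x, ENNReal.ofReal (g z) * ∫⁻ y in Iic z, ENNReal.ofReal (f y) :=
        lintegral_Iio_mul_lintegral_Ico_comm hf.measurable.ennreal_ofReal
          hg.measurable.ennreal_ofReal x
    _ = ∫⁻ z in Iio x, ENNReal.ofReal (g z * ∫ y in Iio z, f y) :=
        lintegral_congr fun z => by
          rw [ENNReal.ofReal_mul (hg0 z), ← setLIntegral_congr Iio_ae_eq_Iic,
            ofReal_integral_eq_lintegral_ofReal hfi.integrableOn (ae_of_all _ hf0)]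

theorem setIntegral_Ioi_mul_intervalIntegral_comm (hf : Continuous f) (hf0 : 0 ≤ f)
    (hfi : Integrable f) (hg : Continuous g) (hg0 : 0 ≤ g) (x : ℝ) :
    ∫ y in Ioi x, f y * ∫ z in x..y, g z = ∫ z in Ioi x, g z * ∫ y in Ioi z, f y := by
  have hprim : Continuous fun y => ∫ z in x..y, g z :=
    intervalIntegral.continuous_primitive (fun _ _ => hg.intervalIntegrable _ _) x
  have hleft0 : 0 ≤ᵐ[volume.restrict (Ioi x)] fun y => f y * ∫ z in x..y, g z := by
    filter_upwards [ae_restrict_mem measurableSet_Ioi] with y hy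
    exact mul_nonneg (hf0 y) (intervalIntegral.integral_nonneg (le_of_lt hy) fun z _ => hg0 z)
  have hright0 : 0 ≤ᵐ[volume.restrict (Ioi x)] fun z => g z * ∫ y in Ioi z, f y :=
    ae_of_all _ fun z => mul_nonneg (hg0 z) (setIntegral_nonneg measurableSet_Ioi fun y _ => hf0 y)
  rw [integral_eq_lintegral_of_nonneg_ae hleft0 (hf.mul hprim).aestronglyMeasurable,
    integral_eq_lintegral_of_nonneg_ae hright0
      (hg.mul (continuous_setIntegral_Ioi fun _ => hfi.integrableOn)).aestronglyMeasurable,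
    lintegral_Ioi_ofReal_mul_intervalIntegral hf hf0 hfi hg hg0]

theorem setIntegral_Iio_mul_intervalIntegral_comm (hf : Continuous f) (hf0 : 0 ≤ f)
    (hfi : Integrable f) (hg : Continuous g) (hg0 : 0 ≤ g) (x : ℝ) :
    ∫ y in Iio x, f y * ∫ z in y..x, g z = ∫ z in Iio x, g z * ∫ y in Iio z, f y := by
  have hprim : Continuous fun y => ∫ z in y..x, g z := by
    simp_rw [intervalIntegral.integral_symm x]
    exact (intervalIntegral.continuous_primitive (fun _ _ => hg.intervalIntegrable _ _) x).neg
  have hleft0 : 0 ≤ᵐ[volume.restrict (Iio x)] fun y => f y * ∫ z in y..x, g z := by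
    filter_upwards [ae_restrict_mem measurableSet_Iio] with y hy
    exact mul_nonneg (hf0 y) (intervalIntegral.integral_nonneg (le_of_lt hy) fun z _ => hg0 z)
  have hright0 : 0 ≤ᵐ[volume.restrict (Iio x)] fun z => g z * ∫ y in Iio z, f y :=
    ae_of_all _ fun z => mul_nonneg (hg0 z) (setIntegral_nonneg measurableSet_Iio fun y _ => hf0 y)
  rw [integral_eq_lintegral_of_nonneg_ae hleft0 (hf.mul hprim).aestronglyMeasurable,
    integral_eq_lintegral_of_nonneg_ae hright0
      (hg.mul (continuous_setIntegral_Iio fun _ => hfi.integrableOn)).aestronglyMeasurable,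
    lintegral_Iio_ofReal_mul_intervalIntegral hf hf0 hfi hg hg0]

theorem integral_mul_setIntegral_Ioi_comm (hf : Continuous f) (hf0 : 0 ≤ f)
    (hfi : Integrable f) (hg : Continuous g) (hg0 : 0 ≤ g) (hgi : ∀ a, IntegrableOn g (Ioi a)) :
    ∫ y, f y * ∫ z in Ioi y, g z = ∫ z, g z * ∫ y in Iio z, f y := by
  rw [integral_eq_lintegral_of_nonneg_ae (ae_of_all _ fun y => mul_nonneg (hf0 y)
      (setIntegral_nonneg measurableSet_Ioi fun z _ => hg0 z))
      (hf.mul (continuous_setIntegral_Ioi hgi)).aestronglyMeasurable,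
    integral_eq_lintegral_of_nonneg_ae (ae_of_all _ fun z => mul_nonneg (hg0 z)
      (setIntegral_nonneg measurableSet_Iio fun y _ => hf0 y))
      (hg.mul (continuous_setIntegral_Iio fun _ => hfi.integrableOn)).aestronglyMeasurable]
  congr 1
  calc ∫⁻ y, ENNReal.ofReal (f y * ∫ z in Ioi y, g z)
      = ∫⁻ y, ENNReal.ofReal (f y) * ∫⁻ z in Ioi y, ENNReal.ofReal (g z) :=
        lintegral_congr fun y => by
          rw [ENNReal.ofReal_mul (hf0 y),
            ofReal_integral_eq_lintegral_ofReal (hgi y) (ae_of_all _ hg0)]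
    _ = ∫⁻ z, ENNReal.ofReal (g z) * ∫⁻ y in Iio z, ENNReal.ofReal (f y) :=
        lintegral_mul_lintegral_Ioi_comm hf.measurable.ennreal_ofReal hg.measurable.ennreal_ofReal
    _ = ∫⁻ z, ENNReal.ofReal (g z * ∫ y in Iio z, f y) :=
        lintegral_congr fun z => by
          rw [ENNReal.ofReal_mul (hg0 z),
            ofReal_integral_eq_lintegral_ofReal hfi.integrableOn (ae_of_all _ hf0)]

theorem integrableOn_mul_setIntegral_Ioi_of_mul_intervalIntegral (hf : Continuous f)
    (hf0 : 0 ≤ f) (hfi : Integrable f) (hg : Continuous g) (hg0 : 0 ≤ g) {x : ℝ}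
    (h : IntegrableOn (fun y => f y * ∫ z in x..y, g z) (Ioi x)) :
    IntegrableOn (fun z => g z * ∫ y in Ioi z, f y) (Ioi x) := by
  refine ⟨(hg.mul (continuous_setIntegral_Ioi fun _ => hfi.integrableOn)).aestronglyMeasurable, ?_⟩
  rw [hasFiniteIntegral_iff_ofReal (ae_of_all _ fun z => mul_nonneg (hg0 z)
      (setIntegral_nonneg measurableSet_Ioi fun y _ => hf0 y)),
    ← lintegral_Ioi_ofReal_mul_intervalIntegral hf hf0 hfi hg hg0]
  exact h.lintegral_lt_top

theorem integrableOn_mul_setIntegral_Iio_of_mul_intervalIntegral (hf : Continuous f)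
    (hf0 : 0 ≤ f) (hfi : Integrable f) (hg : Continuous g) (hg0 : 0 ≤ g) {x : ℝ}
    (h : IntegrableOn (fun y => f y * ∫ z in y..x, g z) (Iio x)) :
    IntegrableOn (fun z => g z * ∫ y in Iio z, f y) (Iio x) := by
  refine ⟨(hg.mul (continuous_setIntegral_Iio fun _ => hfi.integrableOn)).aestronglyMeasurable, ?_⟩
  rw [hasFiniteIntegral_iff_ofReal (ae_of_all _ fun z => mul_nonneg (hg0 z)
      (setIntegral_nonneg measurableSet_Iio fun y _ => hf0 y)),
    ← lintegral_Iio_ofReal_mul_intervalIntegral hf hf0 hfi hg hg0]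
  exact h.lintegral_lt_top

end

theorem integrable_mul_mul_of_integrableOn_Iic_Ioi {u G H : ℝ → ℝ} {C a : ℝ}
    (hm : AEStronglyMeasurable (fun z => u z * G z * H z)) (hu0 : 0 ≤ u) (hG0 : 0 ≤ G)
    (hH0 : 0 ≤ H) (hGC : ∀ z, G z ≤ C) (hHC : ∀ z, H z ≤ C)
    (hIic : IntegrableOn (fun z => u z * H z) (Iic a))
    (hIoi : IntegrableOn (fun z => u z * G z) (Ioi a)) :
    Integrable fun z => u z * G z * H z := by
  have hnorm : ∀ z, ‖u z * G z * H z‖ = u z * G z * H z := fun z =>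
    Real.norm_of_nonneg (mul_nonneg (mul_nonneg (hu0 z) (hG0 z)) (hH0 z))
  rw [← integrableOn_univ, ← Iic_union_Ioi (a := a), integrableOn_union]
  constructor
  · refine (hIic.mul_const C).mono' hm.restrict (ae_of_all _ fun z => ?_)
    rw [hnorm, mul_right_comm]
    exact mul_le_mul_of_nonneg_left (hGC z) (mul_nonneg (hu0 z) (hH0 z))
  · refine (hIoi.mul_const C).mono' hm.restrict (ae_of_all _ fun z => ?_)
    rw [hnorm]
    exact mul_le_mul_of_nonneg_left (hHC z) (mul_nonneg (hu0 z) (hG0 z))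

theorem setIntegral_Ioi_add_setIntegral_Iio_eq_integral {m s : ℝ → ℝ} (hmc : Continuous m)
    (hm0 : 0 ≤ m) (hmi : Integrable m) (hsc : Continuous s) (hs0 : 0 ≤ s)
    (hentp : IntegrableOn (fun x => m x * ∫ t in (0:ℝ)..x, s t) (Ioi 0))
    (hentm : IntegrableOn (fun x => m x * ∫ t in x..(0:ℝ), s t) (Iio 0)) (x : ℝ) :
    (∫ y in Ioi x, m y * ∫ z in x..y, s z * ∫ w in Iio z, m w) +
        (∫ y in Iio x, m y * ∫ z in y..x, s z * ∫ w in Ioi z, m w)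
      = ∫ y, m y * ∫ z in Ioi y, s z * ∫ w in Ioi z, m w := by
  set G := fun z => ∫ w in Ioi z, m w
  set H := fun z => ∫ w in Iio z, m w
  change (∫ y in Ioi x, m y * ∫ z in x..y, s z * H z) + (∫ y in Iio x, m y * ∫ z in y..x, s z * G z)
    = ∫ y, m y * ∫ z in Ioi y, s z * G z
  have hGc : Continuous G := continuous_setIntegral_Ioi fun _ => hmi.integrableOn
  have hHc : Continuous H := continuous_setIntegral_Iio fun _ => hmi.integrableOn
  have hG0 : ∀ z, 0 ≤ G z := fun z => setIntegral_nonneg measurableSet_Ioi fun w _ => hm0 w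
  have hH0 : ∀ z, 0 ≤ H z := fun z => setIntegral_nonneg measurableSet_Iio fun w _ => hm0 w
  have hGle : ∀ z, G z ≤ ∫ w, m w := fun z => setIntegral_le_integral hmi (.of_forall hm0)
  have hHle : ∀ z, H z ≤ ∫ w, m w := fun z => setIntegral_le_integral hmi (.of_forall hm0)
  have hsG0 : 0 ≤ fun z => s z * G z := fun z => mul_nonneg (hs0 z) (hG0 z)
  have hsH0 : 0 ≤ fun z => s z * H z := fun z => mul_nonneg (hs0 z) (hH0 z)
  have hsG : ∀ a, IntegrableOn (fun z => s z * G z) (Ioi a) :=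
    (hsc.mul hGc).integrableOn_Ioi_of_integrableOn_Ioi
      (integrableOn_mul_setIntegral_Ioi_of_mul_intervalIntegral hmc hm0 hmi hsc hs0 hentp)
  have hsH : IntegrableOn (fun z => s z * H z) (Iic 0) :=
    (integrableOn_Iic_iff_integrableOn_Iio).2 <|
      integrableOn_mul_setIntegral_Iio_of_mul_intervalIntegral hmc hm0 hmi hsc hs0 hentm
  have hΦ : Integrable fun z => s z * G z * H z :=
    integrable_mul_mul_of_integrableOn_Iic_Ioi ((hsc.mul hGc).mul hHc).aestronglyMeasurable hs0
      hG0 hH0 hGle hHle hsH (hsG 0)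
  rw [setIntegral_Ioi_mul_intervalIntegral_comm (g := fun z => s z * H z) hmc hm0 hmi
      (hsc.mul hHc) hsH0,
    setIntegral_Iio_mul_intervalIntegral_comm (g := fun z => s z * G z) hmc hm0 hmi
      (hsc.mul hGc) hsG0,
    integral_mul_setIntegral_Ioi_comm (g := fun z => s z * G z) hmc hm0 hmi (hsc.mul hGc) hsG0 hsG,
    ← intervalIntegral.integral_Iic_add_Ioi (b := x) hΦ.integrableOn hΦ.integrableOn, add_comm,
    integral_Iic_eq_integral_Iio]
  congr 1
  exact integral_congr_ae (ae_of_all _ fun z => mul_right_comm _ _ _)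

/-- The constant value of `F` equals the closed-form expression
`2∫ μ(y) ∫_y^∞ μ([z,∞))/(μ(z)a(z)) dz dy`. -/
theorem stmt7 (a b B m s μ F : ℝ → ℝ)
    (ha : Continuous a) (hapos : ∀ x, 0 < a x) (hbc : Continuous b)
    (hB : ∀ x, B x = ∫ t in (0:ℝ)..x, b t / a t)
    (hm : ∀ x, m x = (a x)⁻¹ * Real.exp (2 * B x))
    (hs : ∀ x, s x = Real.exp (-(2 * B x)))
    (hmint : Integrable m)
    (hμ : ∀ x, μ x = m x / ∫ w, m w)
    (hentp : IntegrableOn (fun x => m x * ∫ t in (0:ℝ)..x, s t) (Ioi 0))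
    (hentm : IntegrableOn (fun x => m x * ∫ t in x..(0:ℝ), s t) (Iio 0))
    (hF : ∀ x, F x =
        2 * (∫ y in Ioi x, μ y * ∫ z in x..y, s z * ∫ w in Iio z, m w) +
        2 * (∫ y in Iio x, μ y * ∫ z in y..x, s z * ∫ w in Ioi z, m w)) :
    ∀ x : ℝ, F x =
      2 * ∫ y, μ y * ∫ z in Ioi y, (∫ w in Ioi z, μ w) / (μ z * a z) := by
  intro x
  have hBc : Continuous B := by
    rw [funext hB]
    exact intervalIntegral.continuous_primitive
      (fun _ _ => (hbc.div ha fun z => (hapos z).ne').intervalIntegrable _ _) 0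
  have hmc : Continuous m := by
    rw [funext hm]
    exact (ha.inv₀ fun z => (hapos z).ne').mul (by fun_prop)
  have hsc : Continuous s := by
    rw [funext hs]
    fun_prop
  have hmpos : ∀ z, 0 < m z := fun z => by
    rw [hm]
    exact mul_pos (inv_pos.2 (hapos z)) (Real.exp_pos _)
  have hs0 : 0 ≤ s := fun z => by
    rw [hs]
    positivity
  have hM : 0 < ∫ w, m w := by
    rw [integral_pos_iff_support_of_nonneg (fun z => (hmpos z).le) hmint]
    simp [Function.support, (hmpos _).ne']
  have htail : ∀ z, (∫ w in Ioi z, μ w) / (μ z * a z) = s z * ∫ w in Ioi z, m w := fun z => by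
    simp only [hμ, integral_div]
    rw [hm z, hs z, Real.exp_neg]
    field_simp [hM.ne', (hapos z).ne']
  rw [hF x]
  simp only [htail]
  simp only [hμ, div_mul_eq_mul_div, integral_div]
  rw [← setIntegral_Ioi_add_setIntegral_Iio_eq_integral hmc (fun z => (hmpos z).le) hmint hsc
    hs0 hentp hentm x]
  ring
end

section
/- Let $a,b$ be as above with $\int_{\mathbb{R}} m<\infty$, and suppose the entrance boundary condition at $+\infty$ fails, i.e. $\int_0^{\infty} m(x)\int_0^x s(y)\,dy\,dx = \infty$. Then for every $x\in\mathbb{R}$, $\int_x^{\infty}\mu(y)\,u_{y,-}(x)\,dy = \infty$, where $u_{y,-}(x)=2\int_x^y s(z)\int_{-\infty}^z m(w)\,dw\,dz$ and $\mu = m/\int m$. -/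
/-!
Write `F z = ∫_{-∞}^z m`. Since `F` is nondecreasing and `s ≥ 0`, for `y > x`
`u_{y,-}(x) = 2 ∫_x^y s F ≥ 2 F(x) ∫_x^y s` with `F(x) > 0`, so `μ(y) u_{y,-}(x)` dominates a
positive multiple of `m(y) ∫_x^y s`. Moving the base point of the scale integral from `x` to `0`
only adds a constant multiple of the integrable `m`, and the continuous function
`m(y) ∫_0^y s` is integrable on bounded intervals; hence integrability of the averaged hitting
time on `(x, ∞)` would make `m(y) ∫_0^y s` integrable on `(0, ∞)`, i.e. `+∞` would be an
entrance boundary.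
-/

open MeasureTheory Set

theorem Continuous.integrableOn_Ioi_of_integrableOn_Ioi_s9 {E : Type*} [NormedAddCommGroup E] {f : ℝ → E}
    (hf : Continuous f) {a b : ℝ} (h : IntegrableOn f (Ioi b)) : IntegrableOn f (Ioi a) := by
  rcases le_total b a with hba | hab
  · exact h.mono_set (Ioi_subset_Ioi hba)
  · rw [← Ioc_union_Ioi_eq_Ioi hab]
    exact hf.integrableOn_Ioc.union h

theorem IntegrableOn.mul_primitive_of_base {m s : ℝ → ℝ} {S : Set ℝ} {c : ℝ}
    (h : IntegrableOn (fun y => m y * ∫ t in c..y, s t) S) (hm : Integrable m)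
    (hs : Continuous s) (d : ℝ) :
    IntegrableOn (fun y => m y * ∫ t in d..y, s t) S := by
  have hsplit : ∀ y, m y * ∫ t in d..y, s t
      = (∫ t in d..c, s t) * m y + m y * ∫ t in c..y, s t := fun y => by
    rw [← intervalIntegral.integral_add_adjacent_intervals (hs.intervalIntegrable d c)
      (hs.intervalIntegrable c y)]
    ring
  simp only [hsplit]
  exact (hm.integrableOn.const_mul _).add h

theorem monotone_setIntegral_Iio {m : ℝ → ℝ} (hm : Integrable m) (h0 : 0 ≤ m) :
    Monotone fun z => ∫ w in Iio z, m w := fun _ _ hz =>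
  setIntegral_mono_set hm.integrableOn (ae_of_all _ fun w => h0 w)
    (Iio_subset_Iio hz).eventuallyLE

theorem setIntegral_Iio_pos {m : ℝ → ℝ} (hm : Integrable m) (hpos : ∀ y, 0 < m y) (x : ℝ) :
    0 < ∫ w in Iio x, m w := by
  rw [setIntegral_pos_iff_support_of_nonneg_ae (ae_of_all _ fun w => (hpos w).le)
    hm.integrableOn]
  simp [Function.support_eq_univ fun y => (hpos y).ne']

theorem mul_integral_le_integral_mul_of_monotone {s F : ℝ → ℝ} (hs : Continuous s)
    (hs0 : ∀ t, 0 ≤ s t) (hF : Monotone F) {x y : ℝ} (hxy : x ≤ y) :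
    F x * ∫ t in x..y, s t ≤ ∫ t in x..y, s t * F t := by
  rw [mul_comm, ← intervalIntegral.integral_mul_const]
  refine intervalIntegral.integral_mono_on hxy ((hs.mul continuous_const).intervalIntegrable x y)
    (hF.intervalIntegrable.continuousOn_mul hs.continuousOn) fun t ht => ?_
  exact mul_le_mul_of_nonneg_left (hF ht.1) (hs0 t)

theorem norm_mul_primitive_le {m s : ℝ → ℝ} (hm : Integrable m) (hmpos : ∀ y, 0 < m y)
    (hs : Continuous s) (hs0 : ∀ t, 0 ≤ s t) {x y : ℝ} (hxy : x ≤ y) :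
    ‖m y * ∫ t in x..y, s t‖
      ≤ (∫ w in Iio x, m w)⁻¹ * (m y * ∫ z in x..y, s z * ∫ w in Iio z, m w) := by
  have hFx := setIntegral_Iio_pos hm hmpos x
  have hsF := mul_integral_le_integral_mul_of_monotone hs hs0
    (monotone_setIntegral_Iio hm fun w => (hmpos w).le) hxy
  have hS0 : 0 ≤ ∫ t in x..y, s t := intervalIntegral.integral_nonneg hxy fun t _ => hs0 t
  rw [Real.norm_of_nonneg (mul_nonneg (hmpos y).le hS0), le_inv_mul_iff₀ hFx]
  calc (∫ w in Iio x, m w) * (m y * ∫ t in x..y, s t)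
      = m y * ((∫ w in Iio x, m w) * ∫ t in x..y, s t) := by ring
    _ ≤ m y * ∫ z in x..y, s z * ∫ w in Iio z, m w := by gcongr; exact (hmpos y).le

theorem continuous_of_eq_primitive_div {a b B : ℝ → ℝ} (ha : Continuous a)
    (hapos : ∀ x, 0 < a x) (hb : Continuous b) (hB : ∀ x, B x = ∫ t in (0:ℝ)..x, b t / a t) :
    Continuous B := by
  rw [funext hB]
  exact intervalIntegral.continuous_primitive
    (fun u v => (hb.div ha fun t => (hapos t).ne').intervalIntegrable u v) 0

/-- If the entrance-boundary condition at `+∞` fails, the averaged expected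
hitting time from any starting point is infinite. -/
theorem stmt9 (a b B m s μ : ℝ → ℝ)
    (ha : Continuous a) (hapos : ∀ x, 0 < a x) (hbc : Continuous b)
    (hB : ∀ x, B x = ∫ t in (0:ℝ)..x, b t / a t)
    (hm : ∀ x, m x = (a x)⁻¹ * Real.exp (2 * B x))
    (hs : ∀ x, s x = Real.exp (-(2 * B x)))
    (hmint : Integrable m)
    (hμ : ∀ x, μ x = m x / ∫ w, m w)
    (hfail : ¬ IntegrableOn (fun x => m x * ∫ t in (0:ℝ)..x, s t) (Ioi 0)) :
    ∀ x : ℝ,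
      ¬ IntegrableOn
        (fun y => μ y * (2 * ∫ z in x..y, s z * ∫ w in Iio z, m w)) (Ioi x) := by
  intro x hu
  have hBc := continuous_of_eq_primitive_div ha hapos hbc hB
  have hmc : Continuous m := funext hm ▸ (ha.inv₀ fun t => (hapos t).ne').mul (by fun_prop)
  have hsc : Continuous s := funext hs ▸ by fun_prop
  have hmpos : ∀ y, 0 < m y := fun y => by have := hapos y; rw [hm]; positivity
  have hspos : ∀ y, 0 ≤ s y := fun y => by rw [hs]; positivity
  have hS : ∀ c, Continuous fun y => ∫ t in c..y, s t := fun c =>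
    intervalIntegral.continuous_primitive (fun u v => hsc.intervalIntegrable u v) c
  have hI : (∫ w, m w) ≠ 0 := (integral_pos_of_integrable_nonneg_nonzero hmc hmint
    (fun y => (hmpos y).le) (hmpos 0).ne').ne'
  have hmJ : IntegrableOn (fun y => m y * ∫ z in x..y, s z * ∫ w in Iio z, m w) (Ioi x) := by
    refine IntegrableOn.congr_fun (hu.const_mul ((∫ w, m w) / 2)) (fun y _ => ?_)
      measurableSet_Ioi
    rw [hμ]
    field_simp
  have hmS : IntegrableOn (fun y => m y * ∫ t in x..y, s t) (Ioi x) :=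
    (hmJ.const_mul _).mono' (hmc.mul (hS x)).aestronglyMeasurable <|
      (ae_restrict_mem measurableSet_Ioi).mono fun y hy =>
        norm_mul_primitive_le hmint hmpos hsc hspos (le_of_lt hy)
  exact hfail <| (hmc.mul (hS 0)).integrableOn_Ioi_of_integrableOn_Ioi_s9
    (IntegrableOn.mul_primitive_of_base hmS hmint hsc 0)
end
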